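/- With A_T as defined, the (1,1) entry of A_T⁻¹ equals 2/(1 + β²(T-1)). -/

import Mathlib

open Finset

/-- θ_j^T = (T+1-j) - (T-j)α. -/
noncomputable def theta (α : ℝ) (T j : ℕ) : ℝ := ((T : ℝ) + 1 - j) - ((T : ℝ) - j) * α

/-- Entry a_{ik} of the matrix A_T, for 1-based indices with k ≤ i. -/
noncomputable def entryLow (α : ℝ) (T i k : ℕ) : ℝ :=
  if i = k then
    (if i = T then (1 : ℝ) / 2
     else 1 / 2 + (α - 1) ^ 2 * ∑ j ∈ Finset.Icc i (T - 1), theta α T (j + 1) * α ^ (2 * j - 2 * i))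
  else if i = T then (α - 1) * α ^ (T - k - 1) / 2
  else (α - 1) * theta α T i * α ^ (i - k - 1) / 2
        + (α - 1) ^ 2 * ∑ j ∈ Finset.Icc i (T - 1), theta α T (j + 1) * α ^ (2 * j - i - k)

/-- Entry a_{ik} of A_T (extended symmetrically), 1-based indices. -/
noncomputable def entryA (α : ℝ) (T i k : ℕ) : ℝ :=
  if k ≤ i then entryLow α T i k else entryLow α T k i

/-- The symmetric T×T matrix A_T. -/
noncomputable def Amat (α : ℝ) (T : ℕ) : Matrix (Fin T) (Fin T) ℝ :=
  fun i k => entryA α T (i.1 + 1) (k.1 + 1)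

/-!
Put `c = (1, 1 - α, …, 1 - α)` and `p_T = (1 + β²(T - 1)) / 2`. The key identity is
`A_T c = p_T e₁`. It follows row by row by induction on `T`, because deleting the first row and
column of `A_{T+1}` leaves `A_T`, and to the left of the diagonal the entries of a row are a fixed
multiple of decreasing powers of `α`. Replacing the first column of `A_T` by `A_T c` gives
`det A_T = p_T det A_{T-1}`. So `A_T` is invertible, `A_T⁻¹ e₁ = c / p_T`, and the first entry of
that vector is `1 / p_T`. Below, `pivot α n = p_{n+1}` and `cVec α n` is `c` of length `n + 1`.
-/

open Matrix

theorem Matrix.det_updateCol_mulVec {n R : Type*} [Fintype n] [DecidableEq n] [CommRing R]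
    (A : Matrix n n R) (j : n) (v : n → R) : (A.updateCol j (A *ᵥ v)).det = v j * A.det := by
  have hcol : A *ᵥ v = fun k => ∑ i, v i • A k i :=
    funext fun k => by simp only [mulVec, dotProduct, smul_eq_mul, mul_comm]
  rw [hcol, det_updateCol_sum, smul_eq_mul]

theorem Matrix.det_updateCol_zero_single {n : ℕ} {R : Type*} [CommRing R]
    (A : Matrix (Fin (n + 1)) (Fin (n + 1)) R) (p : R) :
    (A.updateCol 0 (Pi.single 0 p)).det = p * (A.submatrix Fin.succ Fin.succ).det := by
  have hminor : (A.updateCol 0 (Pi.single 0 p)).submatrix Fin.succ Fin.succ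
      = A.submatrix Fin.succ Fin.succ := by
    simpa using submatrix_updateCol_succAbove A (Pi.single 0 p) Fin.succ 0
  rw [det_succ_column_zero, Fin.sum_univ_succ]
  simp [Fin.succ_ne_zero, hminor]

section

variable (α : ℝ)

lemma theta_self (T : ℕ) : theta α T T = 1 := by
  unfold theta; ring

lemma theta_succ_succ (T j : ℕ) : theta α (T + 1) (j + 1) = theta α T j := by
  unfold theta; push_cast; ring

noncomputable def tailSum (T i : ℕ) : ℝ :=
  ∑ j ∈ Icc i (T - 1), theta α T (j + 1) * α ^ (2 * (j - i))

lemma tailSum_self {T : ℕ} (hT : 0 < T) : tailSum α T T = 0 := by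
  rw [tailSum, Icc_eq_empty (by omega), sum_empty]

lemma tailSum_eq_theta_add {T i : ℕ} (hiT : i < T) :
    tailSum α T i = theta α T (i + 1) + α ^ 2 * tailSum α T (i + 1) := by
  rw [tailSum, tailSum, ← add_sum_Ioc_eq_sum_Icc (by omega), ← Icc_add_one_left_eq_Ioc,
    Nat.sub_self, mul_zero, pow_zero, mul_one, mul_sum]
  refine congrArg _ (sum_congr rfl fun j hj => ?_)
  rw [mem_Icc] at hj
  rw [mul_left_comm, ← pow_add]
  congr 2
  omega

lemma tailSum_succ_succ {T : ℕ} (hT : 0 < T) (i : ℕ) :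
    tailSum α (T + 1) (i + 1) = tailSum α T i := by
  obtain ⟨m, rfl⟩ := Nat.exists_eq_add_one.mpr hT
  rw [tailSum, tailSum, Nat.add_sub_cancel, Nat.add_sub_cancel, ← map_add_right_Icc, sum_map]
  refine sum_congr rfl fun j _ => ?_
  simp only [addRightEmbedding_apply, theta_succ_succ, Nat.add_sub_add_right]

lemma entryA_comm (T i k : ℕ) : entryA α T i k = entryA α T k i := by
  unfold entryA
  split_ifs <;> first | rfl | (obtain rfl : i = k := by omega); rfl

lemma entryA_self {T : ℕ} (hT : 0 < T) (i : ℕ) :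
    entryA α T i i = 1 / 2 + (α - 1) ^ 2 * tailSum α T i := by
  rw [entryA, if_pos le_rfl, entryLow, if_pos rfl]
  split_ifs with hi
  · rw [hi, tailSum_self α hT, mul_zero, add_zero]
  · refine congrArg _ (congrArg _ (sum_congr rfl fun j _ => ?_))
    rw [Nat.mul_sub]

lemma entryA_of_lt (T : ℕ) {i k : ℕ} (hki : k < i) :
    entryA α T i k = (α - 1) * theta α T i * α ^ (i - k - 1) / 2
      + (α - 1) ^ 2 * tailSum α T i * α ^ (i - k) := by
  rw [entryA, if_pos hki.le, entryLow, if_neg hki.ne']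
  split_ifs with hi
  · rw [hi, theta_self, tailSum_self α (by omega)]
    ring
  · rw [tailSum, mul_assoc ((α - 1) ^ 2), sum_mul]
    refine congrArg _ (congrArg _ (sum_congr rfl fun j hj => ?_))
    rw [mem_Icc] at hj
    rw [mul_assoc, ← pow_add]
    congr 2
    omega

lemma entryA_succ_succ {T : ℕ} (hT : 0 < T) (i k : ℕ) :
    entryA α (T + 1) (i + 1) (k + 1) = entryA α T i k := by
  wlog hki : k ≤ i generalizing i k
  · rw [entryA_comm, this k i (by omega), entryA_comm]
  obtain rfl | hki := hki.eq_or_lt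
  · rw [entryA_self α (by omega), entryA_self α hT, tailSum_succ_succ α hT]
  · rw [entryA_of_lt α _ (by omega), entryA_of_lt α _ hki, theta_succ_succ,
      tailSum_succ_succ α hT, Nat.add_sub_add_right]

lemma entryA_eq_mul_entryA_succ (T : ℕ) {i k : ℕ} (hki : k + 1 < i) :
    entryA α T i k = α * entryA α T i (k + 1) := by
  rw [entryA_of_lt α T (by omega), entryA_of_lt α T hki,
    show i - k - 1 = i - (k + 1) - 1 + 1 by omega, show i - k = i - (k + 1) + 1 by omega]
  ring

lemma entryA_succ_left_self {T : ℕ} (hT : 0 < T) (k : ℕ) :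
    entryA α T (k + 1) k
      = α * entryA α T (k + 1) (k + 1) + ((α - 1) * theta α T (k + 1) - α) / 2 := by
  rw [entryA_of_lt α T (by omega : k < k + 1), entryA_self α hT, Nat.add_sub_cancel_left,
    Nat.sub_self]
  ring

lemma entryA_self_eq_succ_self {T k : ℕ} (hkT : k < T) :
    entryA α T k k = α ^ 2 * entryA α T (k + 1) (k + 1) + (1 - α ^ 2) / 2
      + (α - 1) ^ 2 * theta α T (k + 1) := by
  rw [entryA_self α (by omega), entryA_self α (by omega), tailSum_eq_theta_add α hkT]
  ring

lemma Amat_comm {T : ℕ} (i k : Fin T) : Amat α T i k = Amat α T k i :=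
  entryA_comm α T _ _

lemma Amat_succ_succ {T : ℕ} (i k : Fin T) : Amat α (T + 1) i.succ k.succ = Amat α T i k :=
  entryA_succ_succ α i.pos _ _

noncomputable def pivot (n : ℕ) : ℝ := (1 + (α - 1) ^ 2 * n) / 2

lemma Amat_zero_zero (n : ℕ) :
    Amat α (n + 2) 0 0 = α ^ 2 * Amat α (n + 2) 1 1 + (1 - α ^ 2) / 2
      + (α - 1) ^ 2 * (1 - (α - 1) * n) := by
  simp only [Amat, Fin.val_zero, Fin.val_one, zero_add]
  rw [entryA_self_eq_succ_self α (by omega : 1 < n + 2), theta]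
  push_cast
  ring

lemma Amat_one_zero (n : ℕ) : Amat α (n + 2) 1 0 = α * Amat α (n + 2) 1 1 - pivot α n := by
  simp only [Amat, Fin.val_zero, Fin.val_one, zero_add]
  rw [entryA_succ_left_self α (by omega), theta, pivot]
  push_cast
  ring

lemma Amat_succ_succ_zero {n : ℕ} (j : Fin n) :
    Amat α (n + 2) j.succ.succ 0 = α * Amat α (n + 2) j.succ.succ 1 := by
  simp only [Amat, Fin.val_succ, Fin.val_zero, Fin.val_one]
  exact entryA_eq_mul_entryA_succ α _ (by omega)

noncomputable def cVec (n : ℕ) : Fin (n + 1) → ℝ := Fin.cons 1 fun _ => 1 - α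

lemma Amat_mulVec_cVec_apply (n : ℕ) (i : Fin (n + 1)) :
    (Amat α (n + 1) *ᵥ cVec α n) i
      = Amat α (n + 1) i 0 + (1 - α) * ∑ k : Fin n, Amat α (n + 1) i k.succ := by
  simp only [mulVec, dotProduct, Fin.sum_univ_succ, cVec, Fin.cons_zero, Fin.cons_succ,
    mul_one, mul_comm (1 - α)]
  rw [sum_mul]

lemma Amat_mulVec_cVec_succ (n : ℕ) (i : Fin (n + 1)) :
    (Amat α (n + 2) *ᵥ cVec α (n + 1)) i.succ
      = Amat α (n + 2) i.succ 0 - α * Amat α (n + 2) i.succ 1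
        + (Amat α (n + 1) *ᵥ cVec α n) i := by
  rw [Amat_mulVec_cVec_apply, Amat_mulVec_cVec_apply, Fin.sum_univ_succ, ← Fin.succ_zero_eq_one]
  simp only [Amat_succ_succ]
  ring

lemma Amat_mulVec_cVec_zero {n : ℕ} (h : (Amat α (n + 1) *ᵥ cVec α n) 0 = pivot α n) :
    (Amat α (n + 2) *ᵥ cVec α (n + 1)) 0 = pivot α (n + 1) := by
  have hrow : ∑ k : Fin (n + 1), Amat α (n + 2) 0 k.succ
      = Amat α (n + 2) 1 0 + α * ∑ k : Fin n, Amat α (n + 1) 0 k.succ := by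
    simp only [Amat_comm α 0, Fin.sum_univ_succ, Amat_succ_succ_zero, mul_sum]
    simp only [← Fin.succ_zero_eq_one, Amat_succ_succ, Amat_comm α _ 0]
  rw [Amat_mulVec_cVec_apply] at h ⊢
  rw [hrow, Amat_zero_zero, Amat_one_zero, ← Fin.succ_zero_eq_one, Amat_succ_succ]
  simp only [pivot] at h ⊢
  push_cast
  linear_combination α * h

theorem Amat_mulVec_cVec (n : ℕ) : Amat α (n + 1) *ᵥ cVec α n = Pi.single 0 (pivot α n) := by
  induction n with
  | zero =>
    ext i
    fin_cases i
    rw [Amat_mulVec_cVec_apply]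
    norm_num [Amat, entryA, entryLow, pivot]
  | succ n ih =>
    ext i
    cases i using Fin.cases with
    | zero => exact Amat_mulVec_cVec_zero α (by rw [ih, Pi.single_eq_same])
    | succ i =>
      rw [Amat_mulVec_cVec_succ, ih, Pi.single_eq_of_ne (Fin.succ_ne_zero i)]
      cases i using Fin.cases with
      | zero => rw [Fin.succ_zero_eq_one, Amat_one_zero, Pi.single_eq_same]; ring
      | succ j => rw [Amat_succ_succ_zero, Pi.single_eq_of_ne (Fin.succ_ne_zero j)]; ring

lemma det_Amat_succ (n : ℕ) : (Amat α (n + 1)).det = pivot α n * (Amat α n).det := by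
  have hminor : (Amat α (n + 1)).submatrix Fin.succ Fin.succ = Amat α n :=
    Matrix.ext fun i k => Amat_succ_succ α i k
  calc (Amat α (n + 1)).det
      = cVec α n 0 * (Amat α (n + 1)).det := by rw [cVec, Fin.cons_zero, one_mul]
    _ = ((Amat α (n + 1)).updateCol 0 (Pi.single 0 (pivot α n))).det := by
      rw [← Amat_mulVec_cVec, det_updateCol_mulVec]
    _ = pivot α n * (Amat α n).det := by rw [det_updateCol_zero_single, hminor]

theorem det_Amat (T : ℕ) : (Amat α T).det = ∏ i ∈ range T, pivot α i := by
  induction T with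
  | zero => exact det_isEmpty
  | succ n ih => rw [det_Amat_succ, ih, prod_range_succ, mul_comm]

end

theorem inverse_entry_general (α : ℝ) (T : ℕ) (h0 : 0 < T) :
    (Amat α T)⁻¹ ⟨0, h0⟩ ⟨0, h0⟩ = 2 / (1 + (α - 1) ^ 2 * ((T : ℝ) - 1)) := by
  obtain ⟨n, rfl⟩ := Nat.exists_eq_add_one.mpr h0
  have hdet : IsUnit (Amat α (n + 1)).det := by
    rw [det_Amat]
    exact (prod_pos fun i _ => by unfold pivot; positivity).ne'.isUnit
  have hcol : (Amat α (n + 1))⁻¹ *ᵥ Pi.single 0 (pivot α n) = cVec α n := by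
    rw [← Amat_mulVec_cVec, mulVec_mulVec, nonsing_inv_mul _ hdet, one_mulVec]
  have h := congrFun hcol 0
  rw [mulVec_single, cVec, Fin.cons_zero] at h
  simp only [Pi.smul_apply, col_apply, MulOpposite.smul_eq_mul_unop, MulOpposite.unop_op] at h
  rw [show 2 / (1 + (α - 1) ^ 2 * (((n + 1 : ℕ) : ℝ) - 1)) = (pivot α n)⁻¹ by
    rw [pivot, inv_div]; push_cast; ring]
  exact eq_inv_of_mul_eq_one_left h

/-- The (1,1) entry of A_T⁻¹ equals 2/(1 + β²(T-1)). -/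
theorem inverse_entry (α : ℝ) (T : ℕ) (hT : 1 ≤ T) (h0 : 0 < T) :
    (Amat α T)⁻¹ ⟨0, h0⟩ ⟨0, h0⟩ = 2 / (1 + (α - 1) ^ 2 * ((T : ℝ) - 1)) :=
  inverse_entry_general α T h0
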